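/- Let $\alpha, \beta \ge 1$. There exists a constant $K > 0$ (depending only on $\alpha,\beta$) such that for all real numbers $a, b, x, y$: $\big| |a+x|^{\alpha}|b+y|^{\beta} - |a|^{\alpha}|b|^{\beta} \big| \le \varepsilon \left( |a|^{\alpha+\beta} + |b|^{\alpha+\beta} \right) + K \varepsilon^{1-(\alpha+\beta)} \left( |x|^{\alpha+\beta} + |y|^{\alpha+\beta} \right)$ for every $\varepsilon \in (0,1)$. -/
import Mathlib
open Real

private lemma rpow_diff_le {p : ℝ} (hp : 1 ≤ p) {u v : ℝ} (hv : 0 ≤ v) (hvu : v ≤ u) :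
    u ^ p - v ^ p ≤ p * (u - v) * u ^ (p - 1) := by
  have hu : 0 ≤ u := hv.trans hvu
  rcases eq_or_lt_of_le hu with h0 | h0
  · have hv0 : v = 0 := le_antisymm (hvu.trans h0.symm.le) hv
    rw [← h0, hv0, Real.zero_rpow (by linarith : p ≠ 0)]
    simp
  · have ht0 : 0 ≤ v / u := div_nonneg hv h0.le
    have key : 1 + p * (v / u - 1) ≤ (v / u) ^ p := by
      have := one_add_mul_self_le_rpow_one_add (s := v / u - 1) (by linarith) hp
      simpa using this
    have e1 : v ^ p = u ^ p * (v / u) ^ p := by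
      rw [← Real.mul_rpow h0.le ht0, mul_div_cancel₀ _ (ne_of_gt h0)]
    have hup : 0 < u ^ p := Real.rpow_pos_of_pos h0 p
    have key2 : u ^ p * (1 + p * (v / u - 1)) ≤ v ^ p := by
      rw [e1]; exact mul_le_mul_of_nonneg_left key hup.le
    have e2 : u ^ p = u ^ (p - 1) * u := by
      have h := Real.rpow_add h0 (p - 1) 1
      rw [Real.rpow_one] at h
      rw [← h]; norm_num
    have e3 : p * (1 - v / u) * u ^ p = p * (u - v) * u ^ (p - 1) := by
      rw [e2]; field_simp
    nlinarith [key2, e3]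

private lemma abs_rpow_sub_rpow {p : ℝ} (hp : 1 ≤ p) {u v : ℝ} (hu : 0 ≤ u) (hv : 0 ≤ v) :
    |u ^ p - v ^ p| ≤ p * |u - v| * (u + v) ^ (p - 1) := by
  wlog h : v ≤ u with H
  · have := H hp hv hu (le_of_not_ge h)
    rwa [abs_sub_comm, abs_sub_comm v u, add_comm] at this
  rw [abs_of_nonneg (sub_nonneg.2 (Real.rpow_le_rpow hv h (by linarith))),
    abs_of_nonneg (sub_nonneg.2 h)]
  calc u ^ p - v ^ p ≤ p * (u - v) * u ^ (p - 1) := rpow_diff_le hp hv h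
    _ ≤ p * (u - v) * (u + v) ^ (p - 1) := by
        refine mul_le_mul_of_nonneg_left
          (Real.rpow_le_rpow hu (by linarith) (by linarith)) (by nlinarith)

private lemma add_rpow_le' {S : ℝ} (hS : 0 ≤ S) {u v : ℝ} (hu : 0 ≤ u) (hv : 0 ≤ v) :
    (u + v) ^ S ≤ 2 ^ S * (u ^ S + v ^ S) := by
  have h1 : u + v ≤ 2 * max u v := by
    rcases le_total u v with h | h
    · rw [max_eq_right h]; linarith
    · rw [max_eq_left h]; linarith
  calc (u + v) ^ S ≤ (2 * max u v) ^ S :=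
        Real.rpow_le_rpow (by positivity) h1 hS
    _ = 2 ^ S * (max u v) ^ S := Real.mul_rpow (by norm_num) (le_max_of_le_left hu)
    _ ≤ 2 ^ S * (u ^ S + v ^ S) := by
        refine mul_le_mul_of_nonneg_left ?_ (by positivity)
        rcases le_total u v with h | h
        · rw [max_eq_right h]; have := Real.rpow_nonneg hu S; linarith
        · rw [max_eq_left h]; have := Real.rpow_nonneg hv S; linarith

private lemma young' {S : ℝ} (hS : 1 < S) {u v δ : ℝ} (hu : 0 ≤ u) (hv : 0 ≤ v) (hδ : 0 < δ) :
    u * v ^ (S - 1) ≤ δ * v ^ S + δ ^ (1 - S) * u ^ S := by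
  have hS1 : (0:ℝ) < S - 1 := by linarith
  have hterm2 : 0 ≤ δ ^ (1 - S) * u ^ S := by positivity
  have hterm1 : 0 ≤ δ * v ^ S := by positivity
  rcases le_or_gt u (δ * v) with h | h
  · have h1 : u * v ^ (S - 1) ≤ (δ * v) * v ^ (S - 1) :=
      mul_le_mul_of_nonneg_right h (by positivity)
    have e : (δ * v) * v ^ (S - 1) = δ * v ^ S := by
      rcases eq_or_lt_of_le hv with h0 | h0
      · rw [← h0, Real.zero_rpow (by linarith : S ≠ 0), Real.zero_rpow (ne_of_gt hS1)]; ring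
      · have hh := Real.rpow_add h0 (S - 1) 1
        rw [Real.rpow_one] at hh
        rw [show S - 1 + 1 = S by ring] at hh
        rw [hh]; ring
    linarith
  · have hu0 : 0 < u := lt_of_le_of_lt (by positivity) h
    have hvu : v ≤ u / δ := by rw [le_div_iff₀ hδ]; nlinarith
    have h1 : v ^ (S - 1) ≤ (u / δ) ^ (S - 1) := Real.rpow_le_rpow hv hvu hS1.le
    have e : u * (u / δ) ^ (S - 1) = δ ^ (1 - S) * u ^ S := by
      have hh := Real.rpow_add hu0 (S - 1) 1
      rw [Real.rpow_one] at hh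
      rw [show S - 1 + 1 = S by ring] at hh
      rw [Real.div_rpow hu0.le hδ.le, show (1 - S) = -(S - 1) by ring,
        Real.rpow_neg hδ.le, hh]
      field_simp
    calc u * v ^ (S - 1) ≤ u * (u / δ) ^ (S - 1) := mul_le_mul_of_nonneg_left h1 hu0.le
      _ = δ ^ (1 - S) * u ^ S := e
      _ ≤ δ * v ^ S + δ ^ (1 - S) * u ^ S := by linarith

set_option maxHeartbeats 1000000 in
theorem stmt6 (α β : ℝ) (hα : 1 ≤ α) (hβ : 1 ≤ β) :
    ∃ K > 0, ∀ (a b x y ε : ℝ), 0 < ε → ε < 1 →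
      |(|a + x| ^ α * |b + y| ^ β - |a| ^ α * |b| ^ β)| ≤
        ε * (|a| ^ (α + β) + |b| ^ (α + β)) +
          K * ε ^ (1 - (α + β)) * (|x| ^ (α + β) + |y| ^ (α + β)) := by
  have hα0 : (0:ℝ) < α := by linarith
  have hβ0 : (0:ℝ) < β := by linarith
  set S : ℝ := α + β with hSdef
  clear_value S
  have hS2 : (2:ℝ) ≤ S := by rw [hSdef]; linarith
  have hS1 : (1:ℝ) < S := by linarith
  have c1 : (0:ℝ) < 2 ^ (α - 1) := Real.rpow_pos_of_pos (by norm_num) _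
  have c2 : (0:ℝ) < 2 ^ (β - 1) := Real.rpow_pos_of_pos (by norm_num) _
  have h2S : (0:ℝ) < 2 ^ S := Real.rpow_pos_of_pos (by norm_num) _
  set C : ℝ := α * 2 ^ (α - 1) + β * 2 ^ (β - 1) with hCdef
  clear_value C
  have hC : 0 < C := by
    rw [hCdef]
    have := mul_pos hα0 c1
    have := mul_pos hβ0 c2
    linarith
  set Q : ℝ := 2 ^ S * 2 ^ S with hQdef
  clear_value Q
  have hQ : 0 < Q := by rw [hQdef]; exact mul_pos h2S h2S
  have hCQ : 0 < C * Q := mul_pos hC hQ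
  have cq1 : (0:ℝ) < (C * Q) ^ (S - 1) := Real.rpow_pos_of_pos hCQ _
  set K : ℝ := 1 + C * 2 ^ S * (C * Q) ^ (S - 1) with hKdef
  clear_value K
  have hK : 0 < K := by
    rw [hKdef]
    have := mul_pos (mul_pos hC h2S) cq1
    linarith
  refine ⟨K, hK, ?_⟩
  intro a b x y ε hε hε1
  set A := |a| with hAd
  set B := |b| with hBd
  set X := |x| with hXd
  set Y := |y| with hYd
  set A' := |a + x| with hA'd
  set B' := |b + y| with hB'd
  have hA0 : 0 ≤ A := hAd ▸ abs_nonneg _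
  have hB0 : 0 ≤ B := hBd ▸ abs_nonneg _
  have hX0 : 0 ≤ X := hXd ▸ abs_nonneg _
  have hY0 : 0 ≤ Y := hYd ▸ abs_nonneg _
  have hA'0 : 0 ≤ A' := hA'd ▸ abs_nonneg _
  have hB'0 : 0 ≤ B' := hB'd ▸ abs_nonneg _
  have hA'le : A' ≤ A + X := by rw [hA'd, hAd, hXd]; exact abs_add_le a x
  have hB'le : B' ≤ B + Y := by rw [hB'd, hBd, hYd]; exact abs_add_le b y
  have habs1 : |A' - A| ≤ X := by
    rw [hA'd, hAd, hXd]
    simpa using abs_abs_sub_abs_le_abs_sub (a + x) a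
  have habs2 : |B' - B| ≤ Y := by
    rw [hB'd, hBd, hYd]
    simpa using abs_abs_sub_abs_le_abs_sub (b + y) b
  clear_value A B X Y A' B'
  set M : ℝ := A + B + X + Y with hMd
  clear_value M
  have hM0 : 0 ≤ M := by rw [hMd]; linarith
  have hm1 : 0 ≤ M ^ (S - 1) := Real.rpow_nonneg hM0 _
  have hsplit : |A' ^ α * B' ^ β - A ^ α * B ^ β| ≤
      |A' ^ α - A ^ α| * B' ^ β + A ^ α * |B' ^ β - B ^ β| := by
    have e : A' ^ α * B' ^ β - A ^ α * B ^ β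
        = (A' ^ α - A ^ α) * B' ^ β + A ^ α * (B' ^ β - B ^ β) := by ring
    rw [e]
    refine (abs_add_le _ _).trans ?_
    rw [abs_mul, abs_mul, abs_of_nonneg (Real.rpow_nonneg hB'0 β),
      abs_of_nonneg (Real.rpow_nonneg hA0 α)]
  have h1 : |A' ^ α - A ^ α| ≤ α * X * (2 ^ (α - 1) * M ^ (α - 1)) := by
    calc |A' ^ α - A ^ α| ≤ α * |A' - A| * (A' + A) ^ (α - 1) :=
          abs_rpow_sub_rpow hα hA'0 hA0
      _ ≤ α * X * (2 * M) ^ (α - 1) := by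
          have hAA : A' + A ≤ 2 * M := by rw [hMd]; linarith
          refine mul_le_mul (mul_le_mul_of_nonneg_left habs1 hα0.le)
            (Real.rpow_le_rpow (by linarith) hAA (by linarith))
            (Real.rpow_nonneg (by linarith) _) (mul_nonneg hα0.le hX0)
      _ = α * X * (2 ^ (α - 1) * M ^ (α - 1)) := by
          rw [Real.mul_rpow (by norm_num) hM0]
  have h2 : |B' ^ β - B ^ β| ≤ β * Y * (2 ^ (β - 1) * M ^ (β - 1)) := by
    calc |B' ^ β - B ^ β| ≤ β * |B' - B| * (B' + B) ^ (β - 1) :=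
          abs_rpow_sub_rpow hβ hB'0 hB0
      _ ≤ β * Y * (2 * M) ^ (β - 1) := by
          have hBB : B' + B ≤ 2 * M := by rw [hMd]; linarith
          refine mul_le_mul (mul_le_mul_of_nonneg_left habs2 hβ0.le)
            (Real.rpow_le_rpow (by linarith) hBB (by linarith))
            (Real.rpow_nonneg (by linarith) _) (mul_nonneg hβ0.le hY0)
      _ = β * Y * (2 ^ (β - 1) * M ^ (β - 1)) := by
          rw [Real.mul_rpow (by norm_num) hM0]
  have hB'M : B' ^ β ≤ M ^ β := by
    refine Real.rpow_le_rpow hB'0 ?_ (by linarith)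
    rw [hMd]; linarith
  have hAM : A ^ α ≤ M ^ α := by
    refine Real.rpow_le_rpow hA0 ?_ (by linarith)
    rw [hMd]; linarith
  have eα : M ^ (α - 1) * M ^ β = M ^ (S - 1) := by
    rw [show S - 1 = (α - 1) + β by rw [hSdef]; ring,
      Real.rpow_add' hM0 (by intro h; linarith)]
  have eβ : M ^ α * M ^ (β - 1) = M ^ (S - 1) := by
    rw [show S - 1 = α + (β - 1) by rw [hSdef]; ring,
      Real.rpow_add' hM0 (by intro h; linarith)]
  have t1 : |A' ^ α - A ^ α| * B' ^ β ≤ α * 2 ^ (α - 1) * (X * M ^ (S - 1)) := by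
    calc |A' ^ α - A ^ α| * B' ^ β
        ≤ (α * X * (2 ^ (α - 1) * M ^ (α - 1))) * M ^ β :=
          mul_le_mul h1 hB'M (Real.rpow_nonneg hB'0 β)
            (mul_nonneg (mul_nonneg hα0.le hX0)
              (mul_nonneg c1.le (Real.rpow_nonneg hM0 _)))
      _ = α * 2 ^ (α - 1) * (X * (M ^ (α - 1) * M ^ β)) := by ring
      _ = α * 2 ^ (α - 1) * (X * M ^ (S - 1)) := by rw [eα]
  have t2 : A ^ α * |B' ^ β - B ^ β| ≤ β * 2 ^ (β - 1) * (Y * M ^ (S - 1)) := by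
    calc A ^ α * |B' ^ β - B ^ β|
        ≤ M ^ α * (β * Y * (2 ^ (β - 1) * M ^ (β - 1))) :=
          mul_le_mul hAM h2 (abs_nonneg _) (Real.rpow_nonneg hM0 α)
      _ = β * 2 ^ (β - 1) * (Y * (M ^ α * M ^ (β - 1))) := by ring
      _ = β * 2 ^ (β - 1) * (Y * M ^ (S - 1)) := by rw [eβ]
  have key : |A' ^ α * B' ^ β - A ^ α * B ^ β| ≤ C * ((X + Y) * M ^ (S - 1)) := by
    have n1 : 0 ≤ α * 2 ^ (α - 1) * (Y * M ^ (S - 1)) :=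
      mul_nonneg (mul_nonneg hα0.le c1.le) (mul_nonneg hY0 hm1)
    have n2 : 0 ≤ β * 2 ^ (β - 1) * (X * M ^ (S - 1)) :=
      mul_nonneg (mul_nonneg hβ0.le c2.le) (mul_nonneg hX0 hm1)
    have e : C * ((X + Y) * M ^ (S - 1)) =
        α * 2 ^ (α - 1) * (X * M ^ (S - 1)) + β * 2 ^ (β - 1) * (Y * M ^ (S - 1))
        + (α * 2 ^ (α - 1) * (Y * M ^ (S - 1)) + β * 2 ^ (β - 1) * (X * M ^ (S - 1))) := by
      rw [hCdef]; ring
    linarith [hsplit, t1, t2]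
  set δ : ℝ := ε / (C * Q) with hδdef
  clear_value δ
  have hδ : 0 < δ := by rw [hδdef]; exact div_pos hε hCQ
  have hy : (X + Y) * M ^ (S - 1) ≤ δ * M ^ S + δ ^ (1 - S) * (X + Y) ^ S :=
    young' hS1 (add_nonneg hX0 hY0) hM0 hδ
  have key2 : |A' ^ α * B' ^ β - A ^ α * B ^ β| ≤
      C * δ * M ^ S + C * (δ ^ (1 - S) * (X + Y) ^ S) := by
    calc |A' ^ α * B' ^ β - A ^ α * B ^ β| ≤ C * ((X + Y) * M ^ (S - 1)) := key
      _ ≤ C * (δ * M ^ S + δ ^ (1 - S) * (X + Y) ^ S) :=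
          mul_le_mul_of_nonneg_left hy hC.le
      _ = C * δ * M ^ S + C * (δ ^ (1 - S) * (X + Y) ^ S) := by ring
  have hXYS : (X + Y) ^ S ≤ 2 ^ S * (X ^ S + Y ^ S) :=
    add_rpow_le' (by linarith) hX0 hY0
  have hMS : M ^ S ≤ Q * (A ^ S + B ^ S) + Q * (X ^ S + Y ^ S) := by
    have hh1 : M ^ S ≤ 2 ^ S * ((A + B) ^ S + (X + Y) ^ S) := by
      rw [hMd, show A + B + X + Y = (A + B) + (X + Y) by ring]
      exact add_rpow_le' (by linarith) (add_nonneg hA0 hB0) (add_nonneg hX0 hY0)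
    have hAB : (A + B) ^ S ≤ 2 ^ S * (A ^ S + B ^ S) :=
      add_rpow_le' (by linarith) hA0 hB0
    have m1 := mul_le_mul_of_nonneg_left hAB h2S.le
    have m2 := mul_le_mul_of_nonneg_left hXYS h2S.le
    rw [hQdef]
    linarith [m1, m2, hh1]
  have hCδQ : C * δ * Q = ε := by
    rw [hδdef]
    field_simp
  have hfirst : C * δ * M ^ S ≤ ε * (A ^ S + B ^ S) + ε * (X ^ S + Y ^ S) := by
    have h := mul_le_mul_of_nonneg_left hMS (mul_pos hC hδ).le
    calc C * δ * M ^ S = (C * δ) * M ^ S := by ring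
      _ ≤ (C * δ) * (Q * (A ^ S + B ^ S) + Q * (X ^ S + Y ^ S)) := h
      _ = (C * δ * Q) * (A ^ S + B ^ S) + (C * δ * Q) * (X ^ S + Y ^ S) := by ring
      _ = ε * (A ^ S + B ^ S) + ε * (X ^ S + Y ^ S) := by rw [hCδQ]
  have hδpow : δ ^ (1 - S) = ε ^ (1 - S) * (C * Q) ^ (S - 1) := by
    rw [hδdef, div_eq_mul_inv, Real.mul_rpow hε.le (inv_nonneg.mpr hCQ.le),
      Real.inv_rpow hCQ.le, ← Real.rpow_neg hCQ.le,
      show -(1 - S) = S - 1 by ring]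
  have hsecond : C * (δ ^ (1 - S) * (X + Y) ^ S) ≤
      C * 2 ^ S * (C * Q) ^ (S - 1) * (ε ^ (1 - S) * (X ^ S + Y ^ S)) := by
    rw [hδpow]
    have hcc : (0:ℝ) ≤ C * (ε ^ (1 - S) * (C * Q) ^ (S - 1)) :=
      mul_nonneg hC.le (mul_nonneg (Real.rpow_nonneg hε.le _) cq1.le)
    have h := mul_le_mul_of_nonneg_left hXYS hcc
    calc C * (ε ^ (1 - S) * (C * Q) ^ (S - 1) * (X + Y) ^ S)
        = (C * (ε ^ (1 - S) * (C * Q) ^ (S - 1))) * (X + Y) ^ S := by ring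
      _ ≤ (C * (ε ^ (1 - S) * (C * Q) ^ (S - 1))) * (2 ^ S * (X ^ S + Y ^ S)) := h
      _ = C * 2 ^ S * (C * Q) ^ (S - 1) * (ε ^ (1 - S) * (X ^ S + Y ^ S)) := by ring
  have hεpow : ε ≤ ε ^ (1 - S) := by
    have hh : (1:ℝ) ≤ ε ^ (1 - S) :=
      Real.one_le_rpow_of_pos_of_le_one_of_nonpos hε hε1.le (by linarith)
    linarith
  have hεXY : ε * (X ^ S + Y ^ S) ≤ ε ^ (1 - S) * (X ^ S + Y ^ S) :=
    mul_le_mul_of_nonneg_right hεpow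
      (add_nonneg (Real.rpow_nonneg hX0 _) (Real.rpow_nonneg hY0 _))
  have hKexp : K * ε ^ (1 - S) * (X ^ S + Y ^ S) =
      ε ^ (1 - S) * (X ^ S + Y ^ S)
      + C * 2 ^ S * (C * Q) ^ (S - 1) * (ε ^ (1 - S) * (X ^ S + Y ^ S)) := by
    rw [hKdef]; ring
  linarith [key2, hfirst, hsecond, hεXY, hKexp]
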